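/- Let r be a positive integer and let f : {1,…,r} → {1,…,r} be a function satisfying: (i) s ≤ f(s) for all s, and (ii) whenever s ≤ t ≤ f(s), one has f(t) ≤ f(s). Then the number of permutations σ of {1,…,r} such that σ^{-1}(s) < σ^{-1}(t) for all pairs s < t with t ≤ f(s) equals r! / ∏_{s=1}^{r} (f(s) − s + 1). -/

import Mathlib

/-!
Read `σ : Perm (Fin n)` as the word `σ 0, σ 1, …`; it is admissible when every `s` occurs
before each `t ∈ (s, f s]`. By nestedness the intervals `[s, f s]` form a forest under
inclusion, admissible words are its linear extensions, and the claim is the hook length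
formula for forests, with hook `f s - s + 1`.

Induct on `n`. The first letter `v` of an admissible word must be outermost (no earlier
interval reaches `v`), and deleting it gives an admissible word for the induced `f` on the
remaining letters, whose hooks are those of `f`. Hence
`#A(f) · ∏ hook = ∑_{v outermost} n! · hook v = n! · (n + 1)`,
since the outermost intervals partition `Fin (n + 1)`.
-/

open Finset Equiv

namespace NestedIntervals

section ConsPerm

variable {n : ℕ} (v : Fin (n + 1))

/-- The word `v` followed by the word `τ` relabelled along `v.succAbove`. -/
def consPerm (τ : Perm (Fin n)) : Perm (Fin (n + 1)) :=
  (finSuccEquiv n).trans (τ.optionCongr.trans (finSuccEquiv' v).symm)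

def tailPerm (σ : Perm (Fin (n + 1))) : Perm (Fin n) :=
  removeNone ((finSuccEquiv n).symm.trans (σ.trans (finSuccEquiv' v)))

@[simp] lemma consPerm_zero (τ : Perm (Fin n)) : consPerm v τ 0 = v := by
  simp [consPerm]

@[simp] lemma consPerm_succ (τ : Perm (Fin n)) (j : Fin n) :
    consPerm v τ j.succ = v.succAbove (τ j) := by
  simp [consPerm]

@[simp] lemma consPerm_inv_self (τ : Perm (Fin n)) : (consPerm v τ)⁻¹ v = 0 := by
  rw [Perm.inv_eq_iff_eq, consPerm_zero]

@[simp] lemma consPerm_inv_succAbove (τ : Perm (Fin n)) (a : Fin n) :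
    (consPerm v τ)⁻¹ (v.succAbove a) = (τ⁻¹ a).succ := by
  rw [Perm.inv_eq_iff_eq, consPerm_succ]; simp

lemma tailPerm_consPerm (τ : Perm (Fin n)) : tailPerm v (consPerm v τ) = τ := by
  have : (finSuccEquiv n).symm.trans ((consPerm v τ).trans (finSuccEquiv' v)) = τ.optionCongr := by
    ext x : 1
    cases x <;> simp [consPerm]
  rw [tailPerm, this, removeNone_optionCongr]

lemma consPerm_tailPerm {σ : Perm (Fin (n + 1))} (h : σ 0 = v) :
    consPerm v (tailPerm v σ) = σ := by
  ext x : 1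
  induction x using Fin.cases with
  | zero => simp [h]
  | succ j =>
    obtain ⟨a, ha⟩ := Fin.exists_succAbove_eq (x := σ j.succ) (y := v)
      (h ▸ σ.injective.ne (Fin.succ_ne_zero j))
    have := removeNone_some ((finSuccEquiv n).symm.trans (σ.trans (finSuccEquiv' v)))
      (x := j) ⟨a, by simp [← ha]⟩
    simp only [trans_apply, finSuccEquiv_symm_some, ← ha, finSuccEquiv'_succAbove,
      Option.some_inj] at this
    rw [consPerm_succ, tailPerm, this, ha]

end ConsPerm

section Intervals

variable {n : ℕ} (f : Fin n → Fin n)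

def hook (s : Fin n) : ℕ := (f s : ℕ) - s + 1

def IsOutermost (v : Fin n) : Prop := ∀ s < v, f s < v

instance : DecidablePred (IsOutermost f) :=
  fun v => inferInstanceAs (Decidable (∀ s < v, f s < v))

def admissiblePerms : Finset (Perm (Fin n)) :=
  univ.filter fun σ => ∀ s t : Fin n, s < t → t ≤ f s → σ⁻¹ s < σ⁻¹ t

variable {f}

lemma mem_admissiblePerms {σ : Perm (Fin n)} :
    σ ∈ admissiblePerms f ↔ ∀ s t : Fin n, s < t → t ≤ f s → σ⁻¹ s < σ⁻¹ t := by
  simp [admissiblePerms]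

lemma hook_eq_card_Icc {s : Fin n} (h : s ≤ f s) : hook f s = #(Icc s (f s)) := by
  rw [hook, Fin.card_Icc]
  have : (s : ℕ) ≤ f s := h
  omega

lemma exists_isOutermost_le_le (h1 : ∀ s, s ≤ f s)
    (h2 : ∀ s t, s ≤ t → t ≤ f s → f t ≤ f s) (t : Fin n) :
    ∃ v, IsOutermost f v ∧ v ≤ t ∧ t ≤ f v := by
  induction t using WellFoundedLT.induction with
  | ind t ih =>
    by_cases ht : IsOutermost f t
    · exact ⟨t, ht, le_rfl, h1 t⟩
    · obtain ⟨s, hst, hts⟩ : ∃ s < t, t ≤ f s := by simpa [IsOutermost] using ht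
      obtain ⟨v, hv, hvs, hsv⟩ := ih s hst
      exact ⟨v, hv, hvs.trans hst.le, hts.trans (h2 v s hvs hsv)⟩

lemma disjoint_Icc_of_isOutermost {v w : Fin n} (hw : IsOutermost f w) (hvw : v < w) :
    Disjoint (Icc v (f v)) (Icc w (f w)) :=
  disjoint_left.mpr fun _ ht ht' ↦
    (hw v hvw).not_ge ((mem_Icc.mp ht').1.trans (mem_Icc.mp ht).2)

/-- The intervals `[v, f v]` with `v` outermost partition `Fin n`. -/
lemma sum_hook_isOutermost (h1 : ∀ s, s ≤ f s)
    (h2 : ∀ s t, s ≤ t → t ≤ f s → f t ≤ f s) :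
    ∑ v with IsOutermost f v, hook f v = n := by
  have hcover : (univ.filter (IsOutermost f)).biUnion (fun v ↦ Icc v (f v)) = univ := by
    refine eq_univ_of_forall fun t ↦ ?_
    obtain ⟨v, hv, hvt, htv⟩ := exists_isOutermost_le_le h1 h2 t
    exact mem_biUnion.mpr ⟨v, by simpa using hv, mem_Icc.mpr ⟨hvt, htv⟩⟩
  have hdisj : (univ.filter (IsOutermost f) : Set (Fin n)).PairwiseDisjoint
      (fun v ↦ Icc v (f v)) := by
    intro v hv w hw hvw
    simp only [coe_filter, mem_univ, true_and, Set.mem_ofPred_eq] at hv hw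
    rcases hvw.lt_or_gt with h | h
    · exact disjoint_Icc_of_isOutermost hw h
    · exact (disjoint_Icc_of_isOutermost hv h).symm
  rw [sum_congr rfl fun v _ ↦ hook_eq_card_Icc (h1 v), ← card_biUnion hdisj, hcover,
    card_univ, Fintype.card_fin]

end Intervals

section EraseOutermost

variable {n : ℕ} (f : Fin (n + 1) → Fin (n + 1)) (v : Fin (n + 1))

/-- The default `a` is only taken if `f` hits `v`, which never happens for outermost `v`. -/
def eraseAt (a : Fin n) : Fin n := (finSuccEquiv' v (f (v.succAbove a))).getD a

variable {f v}

lemma apply_succAbove_ne (h1 : ∀ s, s ≤ f s) (hv : IsOutermost f v) (a : Fin n) :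
    f (v.succAbove a) ≠ v := by
  rcases (v.succAbove_ne a).lt_or_gt with h | h
  · exact (hv _ h).ne
  · exact (h.trans_le (h1 _)).ne'

lemma succAbove_eraseAt (h1 : ∀ s, s ≤ f s) (hv : IsOutermost f v) (a : Fin n) :
    v.succAbove (eraseAt f v a) = f (v.succAbove a) := by
  obtain ⟨b, hb⟩ := Fin.exists_succAbove_eq (apply_succAbove_ne h1 hv a)
  rw [eraseAt, ← hb, finSuccEquiv'_succAbove, Option.getD_some]

lemma eraseAt_le_iff (h1 : ∀ s, s ≤ f s) (hv : IsOutermost f v) {a b : Fin n} :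
    b ≤ eraseAt f v a ↔ v.succAbove b ≤ f (v.succAbove a) := by
  rw [← succAbove_eraseAt h1 hv, Fin.succAbove_le_succAbove_iff]

lemma le_eraseAt (h1 : ∀ s, s ≤ f s) (hv : IsOutermost f v) (a : Fin n) :
    a ≤ eraseAt f v a :=
  (eraseAt_le_iff h1 hv).mpr (h1 _)

lemma eraseAt_le_of_le (h1 : ∀ s, s ≤ f s) (h2 : ∀ s t, s ≤ t → t ≤ f s → f t ≤ f s)
    (hv : IsOutermost f v) {a b : Fin n} (hab : a ≤ b) (hb : b ≤ eraseAt f v a) :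
    eraseAt f v b ≤ eraseAt f v a := by
  rw [eraseAt_le_iff h1 hv, succAbove_eraseAt h1 hv]
  exact h2 _ _ (Fin.succAbove_le_succAbove_iff.mpr hab) ((eraseAt_le_iff h1 hv).mp hb)

lemma map_succAboveEmb_Icc {a b : Fin n} (hv : v ∉ Icc (v.succAbove a) (v.succAbove b)) :
    (Icc a b).map v.succAboveEmb = Icc (v.succAbove a) (v.succAbove b) := by
  ext x
  simp only [mem_map, mem_Icc, Fin.coe_succAboveEmb]
  constructor
  · rintro ⟨y, ⟨hay, hyb⟩, rfl⟩
    exact ⟨Fin.succAbove_le_succAbove_iff.mpr hay, Fin.succAbove_le_succAbove_iff.mpr hyb⟩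
  · intro hx
    obtain ⟨y, rfl⟩ := Fin.exists_succAbove_eq (x := x) (y := v)
      (by rintro rfl; exact hv (mem_Icc.mpr hx))
    exact ⟨y, by simpa only [Fin.succAbove_le_succAbove_iff] using hx, rfl⟩

lemma hook_eraseAt (h1 : ∀ s, s ≤ f s) (hv : IsOutermost f v) (a : Fin n) :
    hook (eraseAt f v) a = hook f (v.succAbove a) := by
  have hvI : v ∉ Icc (v.succAbove a) (f (v.succAbove a)) := by
    rw [mem_Icc, not_and_or, not_le, not_le]
    rcases (v.succAbove_ne a).lt_or_gt with h | h
    · exact .inr (hv _ h)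
    · exact .inl h
  rw [hook_eq_card_Icc (le_eraseAt h1 hv a), hook_eq_card_Icc (h1 _), ← card_map v.succAboveEmb,
    map_succAboveEmb_Icc (by rwa [succAbove_eraseAt h1 hv]), succAbove_eraseAt h1 hv]

lemma prod_hook_eq (h1 : ∀ s, s ≤ f s) (hv : IsOutermost f v) :
    ∏ s, hook f s = hook f v * ∏ a, hook (eraseAt f v) a := by
  rw [Fin.prod_univ_succAbove _ v]
  simp only [hook_eraseAt h1 hv]

end EraseOutermost

section Counting

variable {n : ℕ} {f : Fin (n + 1) → Fin (n + 1)} {v : Fin (n + 1)}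

lemma consPerm_mem_admissiblePerms_iff (h1 : ∀ s, s ≤ f s) (hv : IsOutermost f v)
    (τ : Perm (Fin n)) :
    consPerm v τ ∈ admissiblePerms f ↔ τ ∈ admissiblePerms (eraseAt f v) := by
  simp only [mem_admissiblePerms]
  constructor
  · intro H a b hab hb
    simpa only [consPerm_inv_succAbove, Fin.succ_lt_succ_iff] using
      H (v.succAbove a) (v.succAbove b) (Fin.succAbove_lt_succAbove_iff.mpr hab)
        ((eraseAt_le_iff h1 hv).mp hb)
  · intro H s t hst hts
    obtain ⟨b, rfl⟩ := Fin.exists_succAbove_eq (x := t) (y := v) fun htv ↦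
      (hv s (htv ▸ hst)).not_ge (htv ▸ hts)
    rcases eq_or_ne s v with rfl | hs
    · rw [consPerm_inv_self, consPerm_inv_succAbove]
      exact Fin.succ_pos _
    · obtain ⟨a, rfl⟩ := Fin.exists_succAbove_eq hs
      rw [consPerm_inv_succAbove, consPerm_inv_succAbove, Fin.succ_lt_succ_iff]
      exact H a b (Fin.succAbove_lt_succAbove_iff.mp hst) ((eraseAt_le_iff h1 hv).mpr hts)

lemma card_filter_apply_zero_eq_card_eraseAt (h1 : ∀ s, s ≤ f s) (hv : IsOutermost f v) :
    #{σ ∈ admissiblePerms f | σ 0 = v} = #(admissiblePerms (eraseAt f v)) := by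
  refine card_nbij' (tailPerm v) (consPerm v) (fun σ hσ ↦ ?_) (fun τ hτ ↦ ?_)
    (fun σ hσ ↦ consPerm_tailPerm v (mem_filter.mp hσ).2) (fun τ _ ↦ tailPerm_consPerm v τ)
  · obtain ⟨hσ, h0⟩ := mem_filter.mp hσ
    rw [← consPerm_tailPerm v h0, consPerm_mem_admissiblePerms_iff h1 hv] at hσ
    exact hσ
  · exact mem_filter.mpr ⟨(consPerm_mem_admissiblePerms_iff h1 hv τ).mpr hτ, consPerm_zero v τ⟩

lemma filter_apply_zero_eq_empty (hv : ¬IsOutermost f v) :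
    {σ ∈ admissiblePerms f | σ 0 = v} = ∅ := by
  refine filter_false_of_mem fun σ hσ h0 ↦ ?_
  obtain ⟨s, hsv, hvs⟩ : ∃ s < v, v ≤ f s := by simpa [IsOutermost] using hv
  have := mem_admissiblePerms.mp hσ s v hsv hvs
  simp [← h0] at this

end Counting

open Nat in
theorem card_admissiblePerms_mul_prod_hook {n : ℕ} {f : Fin n → Fin n} (h1 : ∀ s, s ≤ f s)
    (h2 : ∀ s t, s ≤ t → t ≤ f s → f t ≤ f s) :
    #(admissiblePerms f) * ∏ s, hook f s = n ! := by
  induction n with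
  | zero => simp [admissiblePerms]
  | succ n ih =>
    have hfiber (v : Fin (n + 1)) : #{σ ∈ admissiblePerms f | σ 0 = v} * ∏ s, hook f s =
        if IsOutermost f v then n ! * hook f v else 0 := by
      split_ifs with hv
      · rw [card_filter_apply_zero_eq_card_eraseAt h1 hv, prod_hook_eq h1 hv, mul_left_comm,
          ih (le_eraseAt h1 hv) (fun _ _ ↦ eraseAt_le_of_le h1 h2 hv), mul_comm]
      · rw [filter_apply_zero_eq_empty hv, card_empty, zero_mul]
    calc #(admissiblePerms f) * ∏ s, hook f s
        = ∑ v, #{σ ∈ admissiblePerms f | σ 0 = v} * ∏ s, hook f s := by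
          rw [card_eq_sum_card_fiberwise fun σ _ ↦ mem_univ (σ 0), sum_mul]
      _ = n ! * ∑ v with IsOutermost f v, hook f v := by
          rw [sum_congr rfl fun v _ ↦ hfiber v, ← sum_filter, mul_sum]
      _ = (n + 1)! := by
          rw [sum_hook_isOutermost h1 h2, factorial_succ, mul_comm]

end NestedIntervals

theorem card_admissible_perms_general (r : ℕ) (f : Fin r → Fin r)
    (h1 : ∀ s, s ≤ f s)
    (h2 : ∀ s t : Fin r, s ≤ t → t ≤ f s → f t ≤ f s) :
    ((Finset.univ.filter (fun σ : Equiv.Perm (Fin r) =>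
        ∀ s t : Fin r, s < t → t ≤ f s → σ⁻¹ s < σ⁻¹ t)).card : ℚ) =
      (r.factorial : ℚ) / ∏ s : Fin r, (((f s : ℕ) - (s : ℕ) + 1 : ℕ) : ℚ) := by
  have hprod : ∏ s : Fin r, (((f s : ℕ) - (s : ℕ) + 1 : ℕ) : ℚ) ≠ 0 :=
    prod_ne_zero_iff.mpr fun _ _ ↦ Nat.cast_ne_zero.mpr (Nat.succ_ne_zero _)
  rw [eq_div_iff hprod]
  exact_mod_cast NestedIntervals.card_admissiblePerms_mul_prod_hook h1 h2

/-- The abstract combinatorial content of formula (3.1) of the paper.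
Let `f : Fin r → Fin r` satisfy `s ≤ f s` for all `s`, and `f t ≤ f s` whenever
`s ≤ t ≤ f s`.  Then the number of permutations `σ` of `Fin r` such that
`σ⁻¹ s < σ⁻¹ t` for all pairs `s < t` with `t ≤ f s` equals
`r! / ∏ₛ (f s − s + 1)`. -/
theorem card_admissible_perms (r : ℕ) (hr : 0 < r) (f : Fin r → Fin r)
    (h1 : ∀ s, s ≤ f s)
    (h2 : ∀ s t : Fin r, s ≤ t → t ≤ f s → f t ≤ f s) :
    ((Finset.univ.filter (fun σ : Equiv.Perm (Fin r) =>
        ∀ s t : Fin r, s < t → t ≤ f s → σ⁻¹ s < σ⁻¹ t)).card : ℚ) =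
      (r.factorial : ℚ) / ∏ s : Fin r, (((f s : ℕ) - (s : ℕ) + 1 : ℕ) : ℚ) :=
  card_admissible_perms_general r f h1 h2
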